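/- arXiv:2003.06292 — 3 statements merged into one kernel-verified Lean document; each statement's English description precedes it below -/
import Mathlib

section
/- Let k be a field with char(k) ≠ 2, l ≥ 2, μ ∈ k^×, λ ∈ k^×, and let g = [[α, X, Y],[E, A, B],[F, C, D]] ∈ M_{2l+1}(k) (where A,B,C,D are l×l, X,Y are 1×l rows, E,F are l×1 columns, α ∈ k) satisfy ᵀg·β·g = μ·β for β = [[2,0,0],[0,0,I_l],[0,I_l,0]]. If A = diag(1,…,1,λ) and X = 0, then C has the form C = [[C₁₁, −λ·ᵀC₂₁],[C₂₁, 0]], where C₁₁ is a skew-symmetric matrix of size l−1 and the (l,l) entry of C is 0. -/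
/-!
The diagonal block of `ᵀg β g` that sits in the position of `A` is `2 ᵀX X + ᵀA C + ᵀC A`,
while the same block of `μ β` vanishes. With `X = 0` and `A = diag(1, …, 1, λ)` this says that
`ᵀA C` is skew-symmetric; reading this off block by block gives the three claims, the last one
from `2 λ C₂₂ = 0`.
-/

open Matrix

namespace Matrix

section
variable {R : Type*} [CommRing R] {o n : Type*} [Fintype o] [Fintype n] [DecidableEq n]

theorem toBlocks₂₂_toBlocks₁₁_transpose_mul_fromBlocks_antidiag_mul
    (s a : Matrix o o R) (X Y : Matrix o n R) (E F : Matrix n o R) (A B C D : Matrix n n R) :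
    ((fromBlocks a (fromCols X Y) (fromRows E F) (fromBlocks A B C D))ᵀ *
        fromBlocks s 0 0 (fromBlocks 0 1 1 0) *
        fromBlocks a (fromCols X Y) (fromRows E F) (fromBlocks A B C D)).toBlocks₂₂.toBlocks₁₁ =
      Xᵀ * s * X + Aᵀ * C + Cᵀ * A := by
  simp only [fromBlocks_transpose, transpose_fromCols, transpose_fromRows, fromBlocks_multiply,
    toBlocks_fromBlocks₂₂, fromRows_mul, mul_fromCols, fromCols_fromRows_eq_fromBlocks,
    fromBlocks_add, toBlocks_fromBlocks₁₁, Matrix.mul_zero, add_zero, zero_add, Matrix.mul_one]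
  abel
end

section
variable {R : Type*} [CommRing R] {m p : Type*} [Fintype m] [Fintype p] [DecidableEq m]
  [DecidableEq p]

theorem fromBlocks_one_smul_one_transpose_mul_add (lam : R) (C : Matrix (m ⊕ p) (m ⊕ p) R) :
    (fromBlocks 1 0 0 (lam • 1))ᵀ * C + Cᵀ * fromBlocks 1 0 0 (lam • 1) =
      fromBlocks (C.toBlocks₁₁ + C.toBlocks₁₁ᵀ) (C.toBlocks₁₂ + lam • C.toBlocks₂₁ᵀ)
        (lam • C.toBlocks₂₁ + C.toBlocks₁₂ᵀ) (lam • (C.toBlocks₂₂ + C.toBlocks₂₂ᵀ)) := by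
  conv_lhs => rw [← fromBlocks_toBlocks C]
  simp only [fromBlocks_transpose, fromBlocks_multiply, fromBlocks_add, transpose_one,
    transpose_zero, transpose_smul, Matrix.mul_zero, Matrix.zero_mul, add_zero, zero_add,
    Matrix.mul_one, Matrix.one_mul, Matrix.smul_mul, Matrix.mul_smul, smul_add]
end

theorem eq_zero_of_smul_add_transpose_eq_zero {k p : Type*} [Field k] [Subsingleton p]
    {lam : k} {M : Matrix p p k} (hchar : (2 : k) ≠ 0) (hlam : lam ≠ 0)
    (h : lam • (M + Mᵀ) = 0) : M = 0 := by
  ext i j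
  obtain rfl := Subsingleton.elim i j
  have hii : lam * (2 * M i i) = 0 := by
    simpa [two_mul] using congr_fun₂ h i i
  simpa [hlam, hchar] using hii

end Matrix

theorem stmt_12_general {k : Type*} [Field k] (hchar : (2 : k) ≠ 0) (r : ℕ)
    (lam μ : k) (hlam : lam ≠ 0) (α : k)
    (X Y : Matrix (Fin 1) (Fin r ⊕ Fin 1) k)
    (E F : Matrix (Fin r ⊕ Fin 1) (Fin 1) k)
    (A B C D : Matrix (Fin r ⊕ Fin 1) (Fin r ⊕ Fin 1) k)
    (hA : A = Matrix.fromBlocks (1 : Matrix (Fin r) (Fin r) k) 0 0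
      (lam • (1 : Matrix (Fin 1) (Fin 1) k)))
    (hX : X = 0)
    (hg : (Matrix.fromBlocks (α • (1 : Matrix (Fin 1) (Fin 1) k))
          (Matrix.fromCols X Y) (Matrix.fromRows E F) (Matrix.fromBlocks A B C D))ᵀ *
        Matrix.fromBlocks ((2 : k) • (1 : Matrix (Fin 1) (Fin 1) k)) 0 0
          (Matrix.fromBlocks 0 1 1 0) *
        Matrix.fromBlocks (α • (1 : Matrix (Fin 1) (Fin 1) k))
          (Matrix.fromCols X Y) (Matrix.fromRows E F) (Matrix.fromBlocks A B C D) =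
      μ • Matrix.fromBlocks ((2 : k) • (1 : Matrix (Fin 1) (Fin 1) k)) 0 0
        (Matrix.fromBlocks 0 1 1 0)) :
    (C.toBlocks₁₁)ᵀ = -C.toBlocks₁₁ ∧ C.toBlocks₁₂ = -(lam • (C.toBlocks₂₁)ᵀ) ∧
      C.toBlocks₂₂ = 0 := by
  subst hX hA
  have hblock := congrArg (fun M => M.toBlocks₂₂.toBlocks₁₁) hg
  simp only [toBlocks₂₂_toBlocks₁₁_transpose_mul_fromBlocks_antidiag_mul, transpose_zero,
    Matrix.zero_mul, zero_add, fromBlocks_smul, toBlocks_fromBlocks₂₂,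
    toBlocks_fromBlocks₁₁, smul_zero] at hblock
  rw [fromBlocks_one_smul_one_transpose_mul_add, ← fromBlocks_zero, fromBlocks_inj] at hblock
  obtain ⟨h₁₁, h₁₂, -, h₂₂⟩ := hblock
  exact ⟨eq_neg_of_add_eq_zero_right h₁₁, eq_neg_of_add_eq_zero_left h₁₂,
    eq_zero_of_smul_add_transpose_eq_zero hchar hlam h₂₂⟩

/-- `char k ≠ 2`, `l = r + 1 ≥ 2`. If
`g = [[α,X,Y],[E,A,B],[F,C,D]]` satisfies `ᵀg β g = μ β` for
`β = [[2,0,0],[0,0,1],[0,1,0]]`, with `A = diag(1,…,1,λ)` and `X = 0`, then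
`C = [[C₁₁, −λ·ᵀC₂₁],[C₂₁, 0]]` with `C₁₁` skew-symmetric and the `(l,l)` entry of `C`
equal to `0`. -/
theorem stmt_12 {k : Type*} [Field k] (hchar : (2 : k) ≠ 0) (r : ℕ) (hr : 1 ≤ r)
    (lam μ : k) (hlam : lam ≠ 0) (hμ : μ ≠ 0) (α : k)
    (X Y : Matrix (Fin 1) (Fin r ⊕ Fin 1) k)
    (E F : Matrix (Fin r ⊕ Fin 1) (Fin 1) k)
    (A B C D : Matrix (Fin r ⊕ Fin 1) (Fin r ⊕ Fin 1) k)
    (hA : A = Matrix.fromBlocks (1 : Matrix (Fin r) (Fin r) k) 0 0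
      (lam • (1 : Matrix (Fin 1) (Fin 1) k)))
    (hX : X = 0)
    (hg : (Matrix.fromBlocks (α • (1 : Matrix (Fin 1) (Fin 1) k))
          (Matrix.fromCols X Y) (Matrix.fromRows E F) (Matrix.fromBlocks A B C D))ᵀ *
        Matrix.fromBlocks ((2 : k) • (1 : Matrix (Fin 1) (Fin 1) k)) 0 0
          (Matrix.fromBlocks 0 1 1 0) *
        Matrix.fromBlocks (α • (1 : Matrix (Fin 1) (Fin 1) k))
          (Matrix.fromCols X Y) (Matrix.fromRows E F) (Matrix.fromBlocks A B C D) =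
      μ • Matrix.fromBlocks ((2 : k) • (1 : Matrix (Fin 1) (Fin 1) k)) 0 0
        (Matrix.fromBlocks 0 1 1 0)) :
    (C.toBlocks₁₁)ᵀ = -C.toBlocks₁₁ ∧ C.toBlocks₁₂ = -(lam • (C.toBlocks₂₁)ᵀ) ∧
      C.toBlocks₂₂ = 0 :=
  stmt_12_general hchar r lam μ hlam α X Y E F A B C D hA hX hg
end

section
/- Let k be a field with char(k) ≠ 2, l ≥ 1, μ ∈ k^×, and let g = [[α, X, Y],[E, A, B],[F, 0, D]] ∈ M_{2l+1}(k) (where A,B,D are l×l, X,Y are 1×l rows, E,F are l×1 columns, α ∈ k, and the block in position (3,2) is the zero matrix) satisfy ᵀg·β·g = μ·β for β = [[2,0,0],[0,0,I_l],[0,I_l,0]]. Then X = 0, the matrix A is invertible, and D = μ·ᵀA^{−1}. -/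
open Matrix

/-!
Only the lower right `2l × 2l` block of `ᵀg β g = μ β` is needed. Its `(1,1)` entry reads
`2 ᵀX X = 0`; since `X` is a single row, the diagonal of `ᵀX X` consists of the squares `X_j²`,
so `X = 0`. The `(1,2)` entry then reads `ᵀA D = μ`, which makes `μ⁻¹ D` a right inverse of `ᵀA`.
-/

namespace Matrix

variable {R : Type*} [CommRing R] {m n o : Type*}

theorem toBlocks₂₂_transpose_fromBlocks_mul_fromBlocks_mul [Fintype m] [Fintype n]
    (a : Matrix m m R) (b : Matrix m n R) (c : Matrix n m R) (M : Matrix n n R)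
    (β₁ : Matrix m m R) (β₂ : Matrix n n R) :
    ((fromBlocks a b c M)ᵀ * fromBlocks β₁ 0 0 β₂ * fromBlocks a b c M).toBlocks₂₂ =
      bᵀ * β₁ * b + Mᵀ * β₂ * M := by
  simp [fromBlocks_transpose, fromBlocks_multiply]

theorem transpose_fromCols_mul_mul_fromCols (c : Matrix o o R) [Fintype o] (X : Matrix o m R)
    (Y : Matrix o n R) :
    (fromCols X Y)ᵀ * c * fromCols X Y =
      fromBlocks (Xᵀ * c * X) (Xᵀ * c * Y) (Yᵀ * c * X) (Yᵀ * c * Y) := by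
  rw [transpose_fromCols, fromRows_mul, fromRows_mul_fromCols]

theorem transpose_fromBlocks_zero₂₁_mul_hyperbolic_mul_self [Fintype m] [DecidableEq m]
    (A B D : Matrix m m R) :
    (fromBlocks A B 0 D)ᵀ * fromBlocks 0 1 1 0 * fromBlocks A B 0 D =
      fromBlocks 0 (Aᵀ * D) (Dᵀ * A) (Dᵀ * B + Bᵀ * D) := by
  simp [fromBlocks_transpose, fromBlocks_multiply]

theorem eq_zero_of_transpose_mul_self_eq_zero [Unique o] [IsReduced R] {X : Matrix o n R}
    (h : Xᵀ * X = 0) : X = 0 := by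
  ext i j
  have hjj := congrFun (congrFun h j) j
  rw [mul_apply, Fintype.sum_unique, transpose_apply, zero_apply, Subsingleton.elim default i]
    at hjj
  exact IsReduced.eq_zero _ ⟨2, by rw [sq, hjj]⟩

theorem isUnit_and_eq_smul_inv_transpose_of_transpose_mul_eq_smul_one {K : Type*} [Field K]
    [Fintype n] [DecidableEq n] {A D : Matrix n n K} {μ : K} (hμ : μ ≠ 0)
    (h : Aᵀ * D = μ • 1) : IsUnit A ∧ D = μ • (Aᵀ)⁻¹ := by
  have hright : Aᵀ * (μ⁻¹ • D) = 1 := by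
    rw [Matrix.mul_smul, h, smul_smul, inv_mul_cancel₀ hμ, one_smul]
  refine ⟨?_, ?_⟩
  · rw [isUnit_iff_isUnit_det, ← det_transpose]
    exact isUnit_det_of_right_inverse hright
  · rw [inv_eq_right_inv hright, smul_smul, mul_inv_cancel₀ hμ, one_smul]

end Matrix

theorem stmt_13_general {k : Type*} [Field k] (hchar : (2 : k) ≠ 0) (l : ℕ)
    (μ : k) (hμ : μ ≠ 0) (α : k)
    (X Y : Matrix (Fin 1) (Fin l) k)
    (E F : Matrix (Fin l) (Fin 1) k)
    (A B D : Matrix (Fin l) (Fin l) k)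
    (hg : (Matrix.fromBlocks (α • (1 : Matrix (Fin 1) (Fin 1) k))
          (Matrix.fromCols X Y) (Matrix.fromRows E F) (Matrix.fromBlocks A B 0 D))ᵀ *
        Matrix.fromBlocks ((2 : k) • (1 : Matrix (Fin 1) (Fin 1) k)) 0 0
          (Matrix.fromBlocks 0 1 1 0) *
        Matrix.fromBlocks (α • (1 : Matrix (Fin 1) (Fin 1) k))
          (Matrix.fromCols X Y) (Matrix.fromRows E F) (Matrix.fromBlocks A B 0 D) =
      μ • Matrix.fromBlocks ((2 : k) • (1 : Matrix (Fin 1) (Fin 1) k)) 0 0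
        (Matrix.fromBlocks 0 1 1 0)) :
    X = 0 ∧ IsUnit A ∧ D = μ • (Aᵀ)⁻¹ := by
  have hlower := congrArg toBlocks₂₂ hg
  rw [toBlocks₂₂_transpose_fromBlocks_mul_fromBlocks_mul, transpose_fromCols_mul_mul_fromCols,
    transpose_fromBlocks_zero₂₁_mul_hyperbolic_mul_self, fromBlocks_add, fromBlocks_smul,
    toBlocks_fromBlocks₂₂, fromBlocks_smul, fromBlocks_inj] at hlower
  obtain ⟨hXX, hAD, -, -⟩ := hlower
  rw [add_zero, smul_zero, Matrix.mul_smul, Matrix.mul_one, Matrix.smul_mul] at hXX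
  have hX : X = 0 :=
    eq_zero_of_transpose_mul_self_eq_zero ((smul_eq_zero.mp hXX).resolve_left hchar)
  subst hX
  rw [transpose_zero, Matrix.zero_mul, Matrix.zero_mul, zero_add] at hAD
  exact ⟨rfl, isUnit_and_eq_smul_inv_transpose_of_transpose_mul_eq_smul_one hμ hAD⟩

/-- `char k ≠ 2`, `l ≥ 1`. If `g = [[α,X,Y],[E,A,B],[F,0,D]]` satisfies
`ᵀg β g = μ β` for `β = [[2,0,0],[0,0,1],[0,1,0]]`, then `X = 0`, `A` is invertible, and
`D = μ · ᵀA⁻¹`. -/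
theorem stmt_13 {k : Type*} [Field k] (hchar : (2 : k) ≠ 0) (l : ℕ) (hl : 1 ≤ l)
    (μ : k) (hμ : μ ≠ 0) (α : k)
    (X Y : Matrix (Fin 1) (Fin l) k)
    (E F : Matrix (Fin l) (Fin 1) k)
    (A B D : Matrix (Fin l) (Fin l) k)
    (hg : (Matrix.fromBlocks (α • (1 : Matrix (Fin 1) (Fin 1) k))
          (Matrix.fromCols X Y) (Matrix.fromRows E F) (Matrix.fromBlocks A B 0 D))ᵀ *
        Matrix.fromBlocks ((2 : k) • (1 : Matrix (Fin 1) (Fin 1) k)) 0 0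
          (Matrix.fromBlocks 0 1 1 0) *
        Matrix.fromBlocks (α • (1 : Matrix (Fin 1) (Fin 1) k))
          (Matrix.fromCols X Y) (Matrix.fromRows E F) (Matrix.fromBlocks A B 0 D) =
      μ • Matrix.fromBlocks ((2 : k) • (1 : Matrix (Fin 1) (Fin 1) k)) 0 0
        (Matrix.fromBlocks 0 1 1 0)) :
    X = 0 ∧ IsUnit A ∧ D = μ • (Aᵀ)⁻¹ :=
  stmt_13_general hchar l μ hμ α X Y E F A B D hg
end

section
/- Let k be a field with char(k) ≠ 2, l ≥ 1, μ ∈ k^×, and let g = [[α, 0, Y],[0, A, B],[F, 0, D]] ∈ M_{2l+1}(k), where A is an invertible diagonal l×l matrix, B,D are l×l, Y is a 1×l row, F is an l×1 column, and α ∈ k. Then ᵀg·β·g = μ·β for β = [[2,0,0],[0,0,I_l],[0,I_l,0]] if and only if α² = μ, F = 0, Y = 0, D = μ·A^{−1}, and ᵀD·B + ᵀB·D = 0. -/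
/-!
Write `g = [[α, 0, Y], [0, A, B], [F, 0, D]]`. A block computation gives `ᵀg β g` explicitly; comparing
blocks with `μ β`, the corner gives `2α² = 2μ`, the first `l` columns of the top row give `ᵀF A = 0`,
hence `F = 0` as `A` is invertible, and the remaining columns then give `2α Y = 0`, hence `Y = 0`
since `α² = μ ≠ 0`. The lower right `2l × 2l` block is then `[[0, ᵀA D], [ᵀD A, ᵀD B + ᵀB D]]`,
so `ᵀA D = μ` forces `D = μ A⁻¹` because `A` is symmetric.
-/

open Matrix

section BlockSimilitude

variable {R : Type*} [CommRing R] {n : Type*} [DecidableEq n]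

variable (R n) in
def betaForm : Matrix (Fin 1 ⊕ (n ⊕ n)) (Fin 1 ⊕ (n ⊕ n)) R :=
  fromBlocks ((2 : R) • 1) 0 0 (fromBlocks 0 1 1 0)

def blockSimilitude (α : R) (Y : Matrix (Fin 1) n R) (F : Matrix n (Fin 1) R)
    (A B D : Matrix n n R) : Matrix (Fin 1 ⊕ (n ⊕ n)) (Fin 1 ⊕ (n ⊕ n)) R :=
  fromBlocks (α • 1) (fromCols 0 Y) (fromRows 0 F) (fromBlocks A B 0 D)

def IsSimilitude {ι : Type*} [Fintype ι] (β g : Matrix ι ι R) (μ : R) : Prop :=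
  gᵀ * β * g = μ • β

theorem smul_betaForm (μ : R) :
    μ • betaForm R n =
      fromBlocks ((2 * μ) • 1) (fromCols 0 0) (fromRows 0 0) (fromBlocks 0 (μ • 1) (μ • 1) 0) := by
  rw [betaForm, fromBlocks_smul, fromBlocks_smul, fromCols_zero, fromRows_zero, smul_smul,
    mul_comm]
  simp only [smul_zero]

theorem blockSimilitude_transpose_mul_betaForm_mul [Fintype n] (α : R)
    (Y : Matrix (Fin 1) n R) (F : Matrix n (Fin 1) R) (A B D : Matrix n n R) :
    (blockSimilitude α Y F A B D)ᵀ * betaForm R n * blockSimilitude α Y F A B D =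
      fromBlocks ((2 * α ^ 2) • 1) (fromCols (Fᵀ * A) ((2 * α) • Y + Fᵀ * B))
        (fromRows (Aᵀ * F) ((2 * α) • Yᵀ + Bᵀ * F))
        (fromBlocks 0 (Aᵀ * D) (Dᵀ * A) ((2 : R) • (Yᵀ * Y) + (Dᵀ * B + Bᵀ * D))) := by
  simp only [blockSimilitude, betaForm, fromBlocks_transpose, transpose_fromCols,
    transpose_fromRows, fromBlocks_multiply, fromCols_mul_fromBlocks, fromBlocks_mul_fromRows,
    fromCols_mul_fromRows, fromRows_mul, mul_fromCols, transpose_smul, transpose_zero,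
    transpose_one, Matrix.smul_mul, Matrix.mul_smul, Matrix.mul_zero, Matrix.zero_mul,
    Matrix.mul_one, Matrix.one_mul, add_zero, zero_add, smul_smul]
  ext (i | i | i) (j | j | j) <;> simp [two_mul, sq] <;> ring

theorem isSimilitude_betaForm_blockSimilitude_iff [Fintype n] {k : Type*} [Field k]
    (h2 : (2 : k) ≠ 0) {μ : k} (hμ : μ ≠ 0) {α : k} {Y : Matrix (Fin 1) n k}
    {F : Matrix n (Fin 1) k} {A B D : Matrix n n k} (hA : IsUnit A.det) (hAt : Aᵀ = A) :
    IsSimilitude (betaForm k n) (blockSimilitude α Y F A B D) μ ↔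
      α ^ 2 = μ ∧ F = 0 ∧ Y = 0 ∧ D = μ • A⁻¹ ∧ Dᵀ * B + Bᵀ * D = 0 := by
  rw [IsSimilitude, blockSimilitude_transpose_mul_betaForm_mul, smul_betaForm]
  constructor
  · intro h
    simp only [fromBlocks_inj, fromCols_inj.eq_iff, fromRows_inj.eq_iff] at h
    obtain ⟨hα, ⟨hFA, hY⟩, -, -, hAD, -, hDB⟩ := h
    have hα : α ^ 2 = μ := by
      have := congrFun (congrFun hα 0) 0
      simp only [Matrix.smul_apply, one_apply_eq, smul_eq_mul, mul_one] at this
      exact mul_left_cancel₀ h2 this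
    have hF : F = 0 := by
      rw [← transpose_eq_zero, ← mul_nonsing_inv_cancel_right A Fᵀ hA, hFA, Matrix.zero_mul]
    have hα0 : α ≠ 0 := by
      rintro rfl
      exact hμ (by simpa using hα.symm)
    have hY : Y = 0 := by
      rw [hF, transpose_zero, Matrix.zero_mul, add_zero] at hY
      exact (smul_eq_zero.1 hY).resolve_left (mul_ne_zero h2 hα0)
    refine ⟨hα, hF, hY, ?_, ?_⟩
    · rw [← nonsing_inv_mul_cancel_left A D hA, ← hAt, hAD, hAt, Matrix.mul_smul, Matrix.mul_one]
    · simpa [hY] using hDB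
  · rintro ⟨hα, rfl, rfl, hD, hDB⟩
    have hAD : Aᵀ * D = μ • 1 := by rw [hAt, hD, Matrix.mul_smul, mul_nonsing_inv A hA]
    have hDA : Dᵀ * A = μ • 1 := by
      rw [hD, transpose_smul, transpose_nonsing_inv, hAt, Matrix.smul_mul, nonsing_inv_mul A hA]
    simp only [hα, hAD, hDA, hDB, transpose_zero, Matrix.zero_mul, Matrix.mul_zero, smul_zero,
      add_zero]

end BlockSimilitude

theorem stmt_14_general {k : Type*} [Field k] (hchar : (2 : k) ≠ 0) (l : ℕ)
    (μ : k) (hμ : μ ≠ 0) (α : k)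
    (Y : Matrix (Fin 1) (Fin l) k)
    (F : Matrix (Fin l) (Fin 1) k)
    (d : Fin l → k) (hd : ∀ i, d i ≠ 0)
    (A B D : Matrix (Fin l) (Fin l) k)
    (hA : A = Matrix.diagonal d) :
    ((Matrix.fromBlocks (α • (1 : Matrix (Fin 1) (Fin 1) k))
          (Matrix.fromCols 0 Y) (Matrix.fromRows 0 F) (Matrix.fromBlocks A B 0 D))ᵀ *
        Matrix.fromBlocks ((2 : k) • (1 : Matrix (Fin 1) (Fin 1) k)) 0 0
          (Matrix.fromBlocks 0 1 1 0) *
        Matrix.fromBlocks (α • (1 : Matrix (Fin 1) (Fin 1) k))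
          (Matrix.fromCols 0 Y) (Matrix.fromRows 0 F) (Matrix.fromBlocks A B 0 D) =
      μ • Matrix.fromBlocks ((2 : k) • (1 : Matrix (Fin 1) (Fin 1) k)) 0 0
        (Matrix.fromBlocks 0 1 1 0)) ↔
    (α ^ 2 = μ ∧ F = 0 ∧ Y = 0 ∧ D = μ • A⁻¹ ∧ Dᵀ * B + Bᵀ * D = 0) := by
  have hdet : IsUnit A.det := by
    rw [hA, det_diagonal]
    exact isUnit_iff_ne_zero.2 (Finset.prod_ne_zero_iff.2 fun i _ => hd i)
  exact isSimilitude_betaForm_blockSimilitude_iff hchar hμ hdet (by rw [hA, diagonal_transpose])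

/-- `char k ≠ 2`, `l ≥ 1`.  Let `g = [[α,0,Y],[0,A,B],[F,0,D]]` with `A` an
invertible diagonal matrix.  Then `ᵀg β g = μ β` for `β = [[2,0,0],[0,0,1],[0,1,0]]` if and
only if `α² = μ`, `F = 0`, `Y = 0`, `D = μ · A⁻¹` and `ᵀD·B + ᵀB·D = 0`. -/
theorem stmt_14 {k : Type*} [Field k] (hchar : (2 : k) ≠ 0) (l : ℕ) (hl : 1 ≤ l)
    (μ : k) (hμ : μ ≠ 0) (α : k)
    (Y : Matrix (Fin 1) (Fin l) k)
    (F : Matrix (Fin l) (Fin 1) k)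
    (d : Fin l → k) (hd : ∀ i, d i ≠ 0)
    (A B D : Matrix (Fin l) (Fin l) k)
    (hA : A = Matrix.diagonal d) :
    ((Matrix.fromBlocks (α • (1 : Matrix (Fin 1) (Fin 1) k))
          (Matrix.fromCols 0 Y) (Matrix.fromRows 0 F) (Matrix.fromBlocks A B 0 D))ᵀ *
        Matrix.fromBlocks ((2 : k) • (1 : Matrix (Fin 1) (Fin 1) k)) 0 0
          (Matrix.fromBlocks 0 1 1 0) *
        Matrix.fromBlocks (α • (1 : Matrix (Fin 1) (Fin 1) k))
          (Matrix.fromCols 0 Y) (Matrix.fromRows 0 F) (Matrix.fromBlocks A B 0 D) =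
      μ • Matrix.fromBlocks ((2 : k) • (1 : Matrix (Fin 1) (Fin 1) k)) 0 0
        (Matrix.fromBlocks 0 1 1 0)) ↔
    (α ^ 2 = μ ∧ F = 0 ∧ Y = 0 ∧ D = μ • A⁻¹ ∧ Dᵀ * B + Bᵀ * D = 0) :=
  stmt_14_general hchar l μ hμ α Y F d hd A B D hA
end
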